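/- arXiv:2211.14427 — 4 statements merged into one kernel-verified Lean document; each statement's English description precedes it below -/
import Mathlib

section
/- For 0 < σ_ρ ≤ √2, the equation (σ_ρ²/2)·y = arctanh(y) has the unique solution y = 0 on (-1,1); for σ_ρ > √2 it has exactly three solutions y₋ < 0 < y₊ on (-1,1), with y₊ = -y₋. -/
/-
The function `g y = arctanh y - c y` is odd, vanishes at `0`, and has derivative
`(1 - y²)⁻¹ - c`, which is increasing in `|y|` and equals `1 - c` at `0`. For `c ≤ 1`, `g` is
strictly increasing on `[0, 1)`, so `0` is its only root there. For `c > 1`, `g` decreases on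
`[0, b]` and increases on `[b, 1)`, where `(1 - b²)⁻¹ = c`; since `g (tanh c) = c (1 - tanh c) > 0`,
it has exactly one root in `(0, 1)`. Oddness transfers the count to `(-1, 0)`.
-/

open Real Set

/-- arctanh on (-1,1), given by (1/2)·log((1+y)/(1-y)). -/
noncomputable def arctanh (y : ℝ) : ℝ := (1/2) * Real.log ((1 + y) / (1 - y))

lemma arctanh_zero : arctanh 0 = 0 := by
  simp [arctanh]

lemma arctanh_neg (y : ℝ) : arctanh (-y) = -arctanh y := by
  have h : (1 + -y) / (1 - -y) = ((1 + y) / (1 - y))⁻¹ := by rw [inv_div]; ring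
  rw [arctanh, arctanh, h, Real.log_inv]
  ring

lemma arctanh_tanh (x : ℝ) : arctanh (tanh x) = x :=
  (artanh_eq_half_log ⟨(neg_one_lt_tanh x).le, (tanh_lt_one x).le⟩).symm.trans (artanh_tanh x)

lemma hasDerivAt_arctanh {y : ℝ} (hy : y ∈ Ioo (-1) 1) : HasDerivAt arctanh (1 - y ^ 2)⁻¹ y := by
  obtain ⟨h1, h2⟩ := hy
  have hne : 1 - y ≠ 0 := by linarith
  have hne' : 1 + y ≠ 0 := by linarith
  have hsq : 1 - y ^ 2 ≠ 0 := by nlinarith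
  have hpos : 0 < (1 + y) / (1 - y) := div_pos (by linarith) (by linarith)
  refine ((((hasDerivAt_id y).const_add 1).fun_div ((hasDerivAt_id y).const_sub 1) hne).log
    hpos.ne').const_mul (1/2 : ℝ) |>.congr_deriv ?_
  simp only [id]
  field_simp
  ring

lemma continuousOn_arctanh_sub_mul (c : ℝ) :
    ContinuousOn (fun y => arctanh y - c * y) (Ioo (-1) 1) := fun _ hy =>
  ((hasDerivAt_arctanh hy).continuousAt.sub (continuousAt_const.mul continuousAt_id))
    |>.continuousWithinAt

lemma deriv_arctanh_sub_mul (c : ℝ) {y : ℝ} (hy : y ∈ Ioo (-1) 1) :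
    deriv (fun y => arctanh y - c * y) y = (1 - y ^ 2)⁻¹ - c :=
  ((hasDerivAt_arctanh hy).sub ((hasDerivAt_id y).const_mul c)).deriv.trans (by simp)

lemma inv_one_sub_sq_lt_inv_one_sub_sq {x y : ℝ} (hx : 0 ≤ x) (hxy : x < y) (hy : y < 1) :
    (1 - x ^ 2)⁻¹ < (1 - y ^ 2)⁻¹ :=
  (inv_lt_inv₀ (by nlinarith) (by nlinarith)).2 (by nlinarith)

lemma strictMonoOn_arctanh_sub_mul {b c : ℝ} (hb : 0 ≤ b) (hc : c ≤ (1 - b ^ 2)⁻¹) :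
    StrictMonoOn (fun y => arctanh y - c * y) (Ico b 1) := by
  refine strictMonoOn_of_deriv_pos (convex_Ico b 1)
    ((continuousOn_arctanh_sub_mul c).mono fun y hy => ⟨by linarith [hy.1], hy.2⟩) fun x hx => ?_
  rw [interior_Ico] at hx
  rw [deriv_arctanh_sub_mul c ⟨by linarith [hx.1], hx.2⟩, sub_pos]
  exact hc.trans_lt (inv_one_sub_sq_lt_inv_one_sub_sq hb hx.1 hx.2)

lemma strictAntiOn_arctanh_sub_mul {b c : ℝ} (hb : b < 1) (hc : (1 - b ^ 2)⁻¹ ≤ c) :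
    StrictAntiOn (fun y => arctanh y - c * y) (Icc 0 b) := by
  refine strictAntiOn_of_deriv_neg (convex_Icc 0 b)
    ((continuousOn_arctanh_sub_mul c).mono fun y hy => ⟨by linarith [hy.1], by linarith [hy.2]⟩)
    fun x hx => ?_
  rw [interior_Icc] at hx
  rw [deriv_arctanh_sub_mul c ⟨by linarith [hx.1], by linarith [hx.2]⟩, sub_neg]
  exact (inv_one_sub_sq_lt_inv_one_sub_sq hx.1.le hx.2 hb).trans_le hc

def mulEqArctanhSet (c : ℝ) : Set ℝ := {y | y ∈ Ioo (-1) 1 ∧ c * y = arctanh y}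

lemma zero_mem_mulEqArctanhSet (c : ℝ) : 0 ∈ mulEqArctanhSet c :=
  ⟨⟨by norm_num, by norm_num⟩, by rw [mul_zero, arctanh_zero]⟩

lemma neg_mem_mulEqArctanhSet_iff {c y : ℝ} : -y ∈ mulEqArctanhSet c ↔ y ∈ mulEqArctanhSet c := by
  simp only [mulEqArctanhSet, mem_ofPred_eq, neg_mem_Ioo_iff, neg_neg, arctanh_neg, mul_neg, neg_inj]

lemma abs_mem_mulEqArctanhSet_iff {c y : ℝ} : |y| ∈ mulEqArctanhSet c ↔ y ∈ mulEqArctanhSet c := by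
  rcases abs_choice y with h | h <;> rw [h]
  exact neg_mem_mulEqArctanhSet_iff

lemma mulEqArctanhSet_eq_of_inter_Ici {c : ℝ} {P : Set ℝ} (h : mulEqArctanhSet c ∩ Ici 0 = P) :
    mulEqArctanhSet c = {y | |y| ∈ P} := by
  ext y
  rw [← h, mem_ofPred_eq, mem_inter_iff, abs_mem_mulEqArctanhSet_iff, mem_Ici]
  exact (and_iff_left (abs_nonneg y)).symm

lemma mulEqArctanhSet_inter_Ici_of_le_one {c : ℝ} (hc : c ≤ 1) :
    mulEqArctanhSet c ∩ Ici 0 = {0} := by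
  refine subset_antisymm (fun y ⟨⟨⟨_, hy1⟩, hroot⟩, hy0⟩ => ?_)
    (singleton_subset_iff.2 ⟨zero_mem_mulEqArctanhSet c, self_mem_Ici⟩)
  by_contra hne
  have hmono := strictMonoOn_arctanh_sub_mul (b := 0) (c := c) le_rfl (by simpa using hc)
  have := hmono (left_mem_Ico.2 one_pos) ⟨hy0, hy1⟩ (lt_of_le_of_ne hy0 (Ne.symm hne))
  simp only [arctanh_zero, mul_zero, ← hroot, sub_self, lt_self_iff_false] at this

lemma tanh_pos {x : ℝ} (hx : 0 < x) : 0 < tanh x := by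
  rw [tanh_eq_sinh_div_cosh]
  exact div_pos (sinh_pos_iff.2 hx) (cosh_pos x)

lemma arctanh_sub_mul_neg {b c y : ℝ} (hb : b < 1) (hc : (1 - b ^ 2)⁻¹ ≤ c) (hy : y ∈ Ioc 0 b) :
    arctanh y - c * y < 0 := by
  simpa [arctanh_zero] using
    strictAntiOn_arctanh_sub_mul hb hc ⟨le_rfl, hy.1.le.trans hy.2⟩ (Ioc_subset_Icc_self hy) hy.1

lemma exists_mem_Ioo_arctanh_sub_mul_eq_zero {b c : ℝ} (hb0 : 0 < b) (hb1 : b < 1)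
    (hc : (1 - b ^ 2)⁻¹ ≤ c) : ∃ y ∈ Ioo b 1, arctanh y - c * y = 0 := by
  have hc0 : 0 < c := (inv_pos.2 (by nlinarith)).trans_le hc
  have hpos : 0 < arctanh (tanh c) - c * tanh c := by
    rw [arctanh_tanh]
    nlinarith [tanh_lt_one c]
  have hbt : b < tanh c :=
    not_le.1 fun h => (arctanh_sub_mul_neg hb1 hc ⟨tanh_pos hc0, h⟩).not_gt hpos
  obtain ⟨y, ⟨hby, hyt⟩, hy⟩ := intermediate_value_Ioo hbt.le
    ((continuousOn_arctanh_sub_mul c).mono fun y hy =>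
      ⟨by linarith [hy.1], hy.2.trans_lt (tanh_lt_one c)⟩)
    ⟨arctanh_sub_mul_neg hb1 hc ⟨hb0, le_rfl⟩, hpos⟩
  exact ⟨y, ⟨hby, hyt.trans (tanh_lt_one c)⟩, hy⟩

lemma mulEqArctanhSet_inter_Ici_of_one_lt {c : ℝ} (hc : 1 < c) :
    ∃ yp, 0 < yp ∧ mulEqArctanhSet c ∩ Ici 0 = {0, yp} := by
  set b := √(1 - c⁻¹)
  have hinv : c⁻¹ < 1 := inv_lt_one_of_one_lt₀ hc
  have hb0 : 0 < b := sqrt_pos.2 (by linarith)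
  have hb2 : b ^ 2 = 1 - c⁻¹ := sq_sqrt (by linarith)
  have hb1 : b < 1 := by nlinarith [inv_pos.2 (zero_lt_one.trans hc)]
  have hcb : (1 - b ^ 2)⁻¹ = c := by rw [hb2, sub_sub_cancel, inv_inv]
  have hmono := strictMonoOn_arctanh_sub_mul hb0.le hcb.ge
  obtain ⟨yp, ⟨hbyp, hyp1⟩, hyp⟩ := exists_mem_Ioo_arctanh_sub_mul_eq_zero hb0 hb1 hcb.le
  refine ⟨yp, hb0.trans hbyp, subset_antisymm (fun y ⟨⟨⟨_, hy1⟩, hroot⟩, hy0⟩ => ?_) ?_⟩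
  · rintro y (rfl | rfl)
    · exact ⟨zero_mem_mulEqArctanhSet c, self_mem_Ici⟩
    · exact ⟨⟨⟨by linarith, hyp1⟩, (sub_eq_zero.1 hyp).symm⟩, (hb0.trans hbyp).le⟩
  · have hgy : arctanh y - c * y = 0 := sub_eq_zero.2 hroot.symm
    rcases (mem_Ici.1 hy0).eq_or_lt with rfl | hy0
    · exact Or.inl rfl
    have hby : b < y := not_le.1 fun h => (arctanh_sub_mul_neg hb1 hcb.le ⟨hy0, h⟩).ne hgy
    exact Or.inr (hmono.injOn ⟨hby.le, hy1⟩ ⟨hbyp.le, hyp1⟩ (hgy.trans hyp.symm))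

theorem tanh_equation_solutions (σ : ℝ) (hσ : 0 < σ) :
    (σ ≤ Real.sqrt 2 →
      {y : ℝ | y ∈ Set.Ioo (-1:ℝ) 1 ∧ (σ^2/2) * y = arctanh y} = {0}) ∧
    (Real.sqrt 2 < σ →
      ∃ ym yp : ℝ, ym < 0 ∧ 0 < yp ∧ yp = -ym ∧
        {y : ℝ | y ∈ Set.Ioo (-1:ℝ) 1 ∧ (σ^2/2) * y = arctanh y} = {ym, 0, yp}) := by
  refine ⟨fun hle => ?_, fun hlt => ?_⟩
  · have hc : σ ^ 2 / 2 ≤ 1 := by linarith [(le_sqrt hσ.le zero_le_two).1 hle]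
    refine (mulEqArctanhSet_eq_of_inter_Ici (mulEqArctanhSet_inter_Ici_of_le_one hc)).trans ?_
    ext y
    simp
  · have hc : 1 < σ ^ 2 / 2 := by linarith [(sqrt_lt' hσ).1 hlt]
    obtain ⟨yp, hyp, hset⟩ := mulEqArctanhSet_inter_Ici_of_one_lt hc
    refine ⟨-yp, yp, neg_lt_zero.2 hyp, hyp, (neg_neg yp).symm, ?_⟩
    refine (mulEqArctanhSet_eq_of_inter_Ici hset).trans ?_
    ext y
    simp only [mem_ofPred_eq, mem_insert_iff, mem_singleton_iff, abs_eq_zero, abs_eq hyp.le]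
    tauto
end

section
/- The unit-log-normal density f_W(w) = φ(A(w))/(w(1-w)σ_ρ), where φ is the standard normal density and A(w) = (1/σ_ρ)·log(w/(1-w)), is unimodal with mode at w = 1/2 when σ_ρ ≤ √2; when σ_ρ > √2 it is bimodal with a local minimum at w = 1/2 and two modes symmetric about 1/2. -/
/-!
In the coordinate `s = artanh (2w - 1) = log (w / (1 - w)) / 2` one has
`1 / (w (1 - w)) = 4 cosh² s`, so `f_W(w) = 4 / (σ √(2π)) · exp (2 ψ(s))` with
`ψ(s) = log (cosh s) - c s² / 2` and `c = 2 / σ²`. The profile `ψ` is even with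
`ψ'(s) = tanh s - c s`. If `c ≥ 1` (i.e. `σ ≤ √2`) then `tanh s < s ≤ c s` for `s > 0`, so `ψ`
decreases on `[0, ∞)`. If `c < 1`, the strictly concave function `tanh s - c s` on `[0, ∞)`
vanishes at `0`, is positive just after `0` (its slope there is `1 - c`) and negative at `1 / c`,
so it changes sign exactly once, at some `T > 0`: `ψ` has local maxima at `±T` and a local
minimum at `0`.
-/

open Real Set Filter Topology

namespace Real

theorem hasDerivAt_tanh (x : ℝ) : HasDerivAt tanh (1 / cosh x ^ 2) x := by
  have h : HasDerivAt (fun y => sinh y / cosh y)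
      ((cosh x * cosh x - sinh x * sinh x) / cosh x ^ 2) x :=
    (hasDerivAt_sinh x).div (hasDerivAt_cosh x) (cosh_pos x).ne'
  rw [show tanh = fun y => sinh y / cosh y from funext tanh_eq_sinh_div_cosh]
  refine h.congr_deriv ?_
  rw [← cosh_sq_sub_sinh_sq x]
  ring

@[fun_prop]
theorem continuous_tanh : Continuous tanh := by
  simp only [show tanh = fun y => sinh y / cosh y from funext tanh_eq_sinh_div_cosh]
  exact continuous_sinh.div continuous_cosh fun y => (cosh_pos y).ne'

theorem tanh_lt_self {x : ℝ} (hx : 0 < x) : tanh x < x := by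
  have hanti : StrictAntiOn (fun y => tanh y - y) (Ici 0) := by
    refine strictAntiOn_of_deriv_neg (convex_Ici 0) (by fun_prop) fun y hy => ?_
    rw [interior_Ici] at hy
    rw [((hasDerivAt_tanh y).fun_sub (hasDerivAt_id' y)).deriv, sub_neg,
      div_lt_one (by positivity), one_lt_sq_iff₀ (cosh_pos y).le, one_lt_cosh]
    exact hy.ne'
  simpa using hanti self_mem_Ici hx.le hx

theorem continuousAt_artanh {x : ℝ} (hx : x ∈ Ioo (-1) 1) : ContinuousAt artanh x := by
  have hx₁ : 0 < 1 - x := by linarith [hx.2]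
  have hpos : 0 < (1 + x) / (1 - x) := div_pos (by linarith [hx.1]) hx₁
  exact ((continuousAt_const.add continuousAt_id).div (continuousAt_const.sub continuousAt_id)
    hx₁.ne').sqrt.log (sqrt_pos.mpr hpos).ne'

theorem strictConcaveOn_tanh : StrictConcaveOn ℝ (Ici 0) tanh := by
  refine StrictAntiOn.strictConcaveOn_of_deriv (convex_Ici 0) continuous_tanh.continuousOn ?_
  rw [interior_Ici, show deriv tanh = fun x => 1 / cosh x ^ 2 from
    funext fun x => (hasDerivAt_tanh x).deriv]
  intro x hx y hy hxy
  have hcosh : cosh x < cosh y :=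
    cosh_strictMonoOn (le_of_lt hx : (0 : ℝ) ≤ x) (le_of_lt hy : (0 : ℝ) ≤ y) hxy
  exact one_div_lt_one_div_of_lt (by positivity)
    (pow_lt_pow_left₀ hcosh (cosh_pos x).le two_ne_zero)

end Real

theorem StrictConcaveOn.exists_pos_on_Ioo_neg_on_Ioi {f : ℝ → ℝ}
    (hf : StrictConcaveOn ℝ (Ici 0) f) (hcont : ContinuousOn f (Ici 0)) (h0 : f 0 = 0)
    {a b : ℝ} (ha : 0 < a) (hfa : 0 < f a) (hb : 0 ≤ b) (hfb : f b < 0) :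
    ∃ T > 0, (∀ s ∈ Ioo 0 T, 0 < f s) ∧ ∀ s, T < s → f s < 0 := by
  have hab : a < b := by
    by_contra! hba
    have hb0 : 0 < b := hb.lt_of_ne (by rintro rfl; linarith)
    have := hf.lt_on_openSegment self_mem_Ici ha.le ha.ne
      (by rw [openSegment_eq_Ioo ha]; exact ⟨hb0, hba.lt_of_ne (by rintro rfl; linarith)⟩)
    rw [h0, min_eq_left hfa.le] at this
    linarith
  obtain ⟨T, hT, hfT⟩ := intermediate_value_Icc' hab.le
    (hcont.mono fun x hx => ha.le.trans hx.1) ⟨hfb.le, hfa.le⟩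
  have hT0 : 0 < T := ha.trans_le hT.1
  refine ⟨T, hT0, fun s hs => ?_, fun s hs => ?_⟩
  · have := hf.lt_on_openSegment self_mem_Ici hT0.le hT0.ne
      (by rwa [openSegment_eq_Ioo hT0])
    rwa [h0, hfT, min_self] at this
  · have hs0 : 0 < s := hT0.trans hs
    have := hf.lt_on_openSegment self_mem_Ici hs0.le hs0.ne
      (by rw [openSegment_eq_Ioo hs0]; exact ⟨hT0, hs⟩)
    rw [h0, hfT, min_lt_iff] at this
    exact this.resolve_left (lt_irrefl 0)

section LocalExtr

variable {α β γ δ : Type*} [TopologicalSpace α] [TopologicalSpace β] [Preorder γ] [Preorder δ]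
  {f : α → δ} {g : β → γ} {u : α → β} {F : γ → δ} {S : Set α} {w : α}

theorem IsLocalMax.of_eqOn_comp (hg : IsLocalMax g (u w)) (hu : ContinuousAt u w)
    (hF : Monotone F) (hS : S ∈ 𝓝 w) (heq : EqOn f (F ∘ g ∘ u) S) : IsLocalMax f w :=
  ((hg.comp_continuous hu).comp_mono hF).congr (eventually_of_mem hS fun _ hx => (heq hx).symm)

theorem IsLocalMin.of_eqOn_comp (hg : IsLocalMin g (u w)) (hu : ContinuousAt u w)
    (hF : Monotone F) (hS : S ∈ 𝓝 w) (heq : EqOn f (F ∘ g ∘ u) S) : IsLocalMin f w :=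
  ((hg.comp_continuous hu).comp_mono hF).congr (eventually_of_mem hS fun _ hx => (heq hx).symm)

end LocalExtr

section TanhSubMul

variable {c : ℝ}

theorem tanh_sub_mul_neg (hc : 1 ≤ c) {s : ℝ} (hs : 0 < s) : tanh s - c * s < 0 := by
  nlinarith [tanh_lt_self hs]

theorem exists_tanh_sub_mul_pos (hc : c < 1) : ∃ a > 0, 0 < tanh a - c * a := by
  have hderiv : HasDerivAt (fun s => tanh s - c * s) (1 - c) 0 := by
    simpa using (hasDerivAt_tanh 0).fun_sub ((hasDerivAt_id' 0).const_mul c)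
  have hslope : ∀ᶠ t in 𝓝[>] (0 : ℝ), 0 < t ∧ 0 < t⁻¹ * (tanh t - c * t) := by
    filter_upwards [self_mem_nhdsWithin,
      hderiv.tendsto_slope_zero_right.eventually (lt_mem_nhds (sub_pos.mpr hc))] with t ht hpos
    simpa [tanh_zero] using And.intro ht hpos
  obtain ⟨a, ha, hpos⟩ := hslope.exists
  exact ⟨a, ha, pos_of_mul_pos_right hpos (inv_pos.mpr ha).le⟩

theorem exists_tanh_sub_mul_sign_change (hc₀ : 0 < c) (hc₁ : c < 1) :
    ∃ T > 0, (∀ s ∈ Ioo 0 T, 0 < tanh s - c * s) ∧ ∀ s, T < s → tanh s - c * s < 0 := by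
  obtain ⟨a, ha, hfa⟩ := exists_tanh_sub_mul_pos hc₁
  have hfb : tanh c⁻¹ - c * c⁻¹ < 0 := by
    rw [mul_inv_cancel₀ hc₀.ne', sub_neg]
    exact tanh_lt_one _
  exact (strictConcaveOn_tanh.sub_convexOn ((convexOn_id (convex_Ici 0)).smul hc₀.le))
    |>.exists_pos_on_Ioo_neg_on_Ioi (by fun_prop) (by simp) ha hfa (inv_nonneg.mpr hc₀.le) hfb

end TanhSubMul

noncomputable def logProfile (c s : ℝ) : ℝ := log (cosh s) - c * s ^ 2 / 2

section LogProfile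

variable (c : ℝ)

theorem logProfile_neg (s : ℝ) : logProfile c (-s) = logProfile c s := by
  simp [logProfile]

theorem logProfile_abs (s : ℝ) : logProfile c |s| = logProfile c s := by
  rcases abs_choice s with h | h <;> rw [h]
  exact logProfile_neg c s

theorem hasDerivAt_logProfile (s : ℝ) : HasDerivAt (logProfile c) (tanh s - c * s) s := by
  have h : HasDerivAt (fun y => log (cosh y) - c * y ^ 2 / 2)
      (sinh s / cosh s - c * (2 * s) / 2) s := by
    simpa using ((hasDerivAt_cosh s).log (cosh_pos s).ne').fun_sub
      ((hasDerivAt_pow 2 s).const_mul c |>.div_const 2)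
  refine h.congr_deriv ?_
  rw [tanh_eq_sinh_div_cosh]
  ring

theorem continuous_logProfile : Continuous (logProfile c) :=
  continuous_iff_continuousAt.mpr fun s => (hasDerivAt_logProfile c s).continuousAt

variable {c}

theorem strictAntiOn_logProfile (hc : 1 ≤ c) : StrictAntiOn (logProfile c) (Ici 0) := by
  refine strictAntiOn_of_deriv_neg (convex_Ici 0) (continuous_logProfile c).continuousOn
    fun s hs => ?_
  rw [interior_Ici] at hs
  rw [(hasDerivAt_logProfile c s).deriv]
  exact tanh_sub_mul_neg hc hs

theorem strictMonoOn_logProfile (hc : 1 ≤ c) : StrictMonoOn (logProfile c) (Iic 0) := by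
  intro x hx y hy hxy
  rw [← logProfile_neg c x, ← logProfile_neg c y]
  exact strictAntiOn_logProfile hc (mem_Ici.mpr (neg_nonneg.mpr hy))
    (mem_Ici.mpr (neg_nonneg.mpr hx)) (neg_lt_neg hxy)

theorem exists_isLocalMax_logProfile (hc₀ : 0 < c) (hc₁ : c < 1) :
    ∃ T > 0, IsLocalMax (logProfile c) T ∧ IsLocalMax (logProfile c) (-T) ∧
      IsLocalMin (logProfile c) 0 := by
  obtain ⟨T, hT, hpos, hneg⟩ := exists_tanh_sub_mul_sign_change hc₀ hc₁
  have hmono : StrictMonoOn (logProfile c) (Icc 0 T) := by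
    refine strictMonoOn_of_deriv_pos (convex_Icc 0 T) (continuous_logProfile c).continuousOn
      fun s hs => ?_
    rw [interior_Icc] at hs
    rw [(hasDerivAt_logProfile c s).deriv]
    exact hpos s hs
  have hanti : StrictAntiOn (logProfile c) (Ici T) := by
    refine strictAntiOn_of_deriv_neg (convex_Ici T) (continuous_logProfile c).continuousOn
      fun s hs => ?_
    rw [interior_Ici] at hs
    rw [(hasDerivAt_logProfile c s).deriv]
    exact hneg s hs
  have hmax : IsLocalMax (logProfile c) T := by
    filter_upwards [lt_mem_nhds hT] with s hs
    rcases le_total s T with h | h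
    · exact hmono.monotoneOn ⟨hs.le, h⟩ ⟨hT.le, le_rfl⟩ h
    · exact hanti.antitoneOn self_mem_Ici h h
  refine ⟨T, hT, hmax, ?_, ?_⟩
  · have h : IsLocalMax (logProfile c) (-(-T)) := by rwa [neg_neg]
    have := h.comp_continuous continuous_neg.continuousAt
    rwa [show logProfile c ∘ Neg.neg = logProfile c from funext (logProfile_neg c)] at this
  · filter_upwards [Ioo_mem_nhds (neg_neg_of_pos hT) hT] with s hs
    rw [← logProfile_abs c s]
    exact hmono.monotoneOn ⟨le_rfl, hT.le⟩ ⟨abs_nonneg s, (abs_lt.mpr hs).le⟩ (abs_nonneg s)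

end LogProfile

noncomputable def halfLogit (w : ℝ) : ℝ := artanh (2 * w - 1)

theorem halfLogit_eq {w : ℝ} (hw : w ∈ Ioo 0 1) : halfLogit w = log (w / (1 - w)) / 2 := by
  rw [halfLogit, artanh_eq_half_log ⟨by linarith [hw.1], by linarith [hw.2]⟩]
  rw [show (1 + (2 * w - 1)) / (1 - (2 * w - 1)) = w / (1 - w) by
    rw [div_eq_div_iff (by linarith [hw.2]) (by linarith [hw.2])]; ring]
  ring

theorem cosh_halfLogit_sq {w : ℝ} (hw : w ∈ Ioo 0 1) :
    cosh (halfLogit w) ^ 2 = 1 / (4 * (w * (1 - w))) := by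
  have hx : 2 * w - 1 ∈ Ioo (-1) 1 := ⟨by linarith [hw.1], by linarith [hw.2]⟩
  rw [halfLogit, cosh_artanh hx, div_pow, sq_sqrt (by nlinarith [hw.1, hw.2])]
  ring

theorem halfLogit_one_add_tanh_div_two (s : ℝ) : halfLogit ((1 + tanh s) / 2) = s := by
  rw [halfLogit, show 2 * ((1 + tanh s) / 2) - 1 = tanh s by ring, artanh_tanh]

theorem one_add_tanh_div_two_mem_Ioo (s : ℝ) : (1 + tanh s) / 2 ∈ Ioo 0 1 :=
  ⟨by linarith [neg_one_lt_tanh s], by linarith [tanh_lt_one s]⟩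

theorem strictMonoOn_halfLogit : StrictMonoOn halfLogit (Ioo 0 1) :=
  fun _ hx _ hy hxy => artanh_lt_artanh (by linarith [hx.1]) (by linarith [hy.2]) (by linarith)

theorem continuousAt_halfLogit {w : ℝ} (hw : w ∈ Ioo 0 1) : ContinuousAt halfLogit w :=
  (continuousAt_artanh ⟨by linarith [hw.1], by linarith [hw.2]⟩).comp (by fun_prop)

noncomputable def unitLogNormalDensity (σ w : ℝ) : ℝ :=
  exp (-((1 / σ) * log (w / (1 - w))) ^ 2 / 2) / √(2 * π) / (w * (1 - w) * σ)

section UnitLogNormal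

variable {σ : ℝ}

theorem unitLogNormalDensity_eqOn (hσ : σ ≠ 0) :
    EqOn (unitLogNormalDensity σ)
      ((fun x => 4 / (σ * √(2 * π)) * exp (2 * x)) ∘ logProfile (2 / σ ^ 2) ∘ halfLogit)
      (Ioo 0 1) := by
  intro w hw
  have hexp : exp (2 * logProfile (2 / σ ^ 2) (halfLogit w)) =
      cosh (halfLogit w) ^ 2 * exp (-(2 / σ ^ 2) * halfLogit w ^ 2) := by
    rw [logProfile, ← exp_log (pow_pos (cosh_pos (halfLogit w)) 2), ← exp_add, log_pow]
    congr 1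
    push_cast
    ring
  simp only [Function.comp_apply, unitLogNormalDensity]
  rw [hexp, cosh_halfLogit_sq hw, halfLogit_eq hw]
  have hw₀ : 0 < w := hw.1
  have hw₁ : 0 < 1 - w := by linarith [hw.2]
  field_simp

theorem strictMono_const_mul_exp_two_mul {K : ℝ} (hK : 0 < K) :
    StrictMono fun x : ℝ => K * exp (2 * x) :=
  fun _ _ hxy => mul_lt_mul_of_pos_left (exp_lt_exp.mpr (by linarith)) hK

theorem unitLogNormalDensity_unimodal (hσ : 0 < σ) (hσ₂ : σ ≤ √2) :
    StrictMonoOn (unitLogNormalDensity σ) (Ioo 0 (1 / 2)) ∧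
      StrictAntiOn (unitLogNormalDensity σ) (Ioo (1 / 2) 1) := by
  have hc : 1 ≤ 2 / σ ^ 2 := by
    rw [le_div_iff₀ (by positivity), one_mul, ← sq_sqrt zero_le_two]
    gcongr
  have hF := strictMono_const_mul_exp_two_mul (K := 4 / (σ * √(2 * π))) (by positivity)
  have heq := unitLogNormalDensity_eqOn hσ.ne'
  constructor
  · have hsub : Ioo (0 : ℝ) (1 / 2) ⊆ Ioo 0 1 := Ioo_subset_Ioo_right (by norm_num)
    refine (hF.comp_strictMonoOn ((strictMonoOn_logProfile hc).comp
      (strictMonoOn_halfLogit.mono hsub) fun w hw => ?_)).congr (heq.mono hsub).symm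
    exact artanh_nonpos (by linarith [hw.2])
  · have hsub : Ioo (1 / 2 : ℝ) 1 ⊆ Ioo 0 1 := Ioo_subset_Ioo_left (by norm_num)
    refine (hF.comp_strictAntiOn ((strictAntiOn_logProfile hc).comp_strictMonoOn
      (strictMonoOn_halfLogit.mono hsub) fun w hw => ?_)).congr (heq.mono hsub).symm
    exact artanh_nonneg (by linarith [hw.1])

theorem unitLogNormalDensity_bimodal (hσ : √2 < σ) :
    ∃ wm wp : ℝ, 0 < wm ∧ wm < 1 / 2 ∧ 1 / 2 < wp ∧ wp < 1 ∧ wm + wp = 1 ∧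
      IsLocalMax (unitLogNormalDensity σ) wm ∧ IsLocalMax (unitLogNormalDensity σ) wp ∧
      IsLocalMin (unitLogNormalDensity σ) (1 / 2) := by
  have hσ₀ : 0 < σ := (sqrt_nonneg 2).trans_lt hσ
  have hc₁ : 2 / σ ^ 2 < 1 := by
    rw [div_lt_one (by positivity), ← sq_sqrt zero_le_two]
    gcongr
  obtain ⟨T, hT, hmax, hmax', hmin⟩ := exists_isLocalMax_logProfile (by positivity) hc₁
  have hF :=
    (strictMono_const_mul_exp_two_mul (K := 4 / (σ * √(2 * π))) (by positivity)).monotone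
  have heq := unitLogNormalDensity_eqOn hσ₀.ne'
  have hnhds (s : ℝ) : Ioo 0 1 ∈ 𝓝 ((1 + tanh s) / 2) :=
    isOpen_Ioo.mem_nhds (one_add_tanh_div_two_mem_Ioo s)
  have hu (s : ℝ) := continuousAt_halfLogit (one_add_tanh_div_two_mem_Ioo s)
  have htanh : 0 < tanh T := by
    rw [tanh_eq_sinh_div_cosh]
    exact div_pos (sinh_pos_iff.mpr hT) (cosh_pos T)
  refine ⟨(1 + tanh (-T)) / 2, (1 + tanh T) / 2, ?_, ?_, ?_, ?_, ?_, ?_, ?_, ?_⟩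
  · exact (one_add_tanh_div_two_mem_Ioo _).1
  · rw [tanh_neg]; linarith
  · linarith
  · exact (one_add_tanh_div_two_mem_Ioo _).2
  · rw [tanh_neg]; ring
  · exact IsLocalMax.of_eqOn_comp (by rwa [halfLogit_one_add_tanh_div_two]) (hu _) hF (hnhds _) heq
  · exact IsLocalMax.of_eqOn_comp (by rwa [halfLogit_one_add_tanh_div_two]) (hu _) hF (hnhds _) heq
  · rw [show (1 / 2 : ℝ) = (1 + tanh 0) / 2 by simp]
    exact IsLocalMin.of_eqOn_comp (by rwa [halfLogit_one_add_tanh_div_two]) (hu _) hF (hnhds _) heq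

end UnitLogNormal

theorem unit_log_normal_modality (σ : ℝ) (hσ : 0 < σ)
    (φ : ℝ → ℝ) (hφ : ∀ x, φ x = Real.exp (-x^2/2) / Real.sqrt (2*π))
    (A : ℝ → ℝ) (hA : ∀ w, A w = (1/σ) * Real.log (w / (1 - w)))
    (fW : ℝ → ℝ) (hfW : ∀ w, fW w = φ (A w) / (w * (1 - w) * σ)) :
    (σ ≤ Real.sqrt 2 →
      StrictMonoOn fW (Set.Ioo 0 (1/2)) ∧ StrictAntiOn fW (Set.Ioo (1/2) 1)) ∧
    (Real.sqrt 2 < σ →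
      ∃ wm wp : ℝ, 0 < wm ∧ wm < 1/2 ∧ 1/2 < wp ∧ wp < 1 ∧ wm + wp = 1 ∧
        IsLocalMax fW wm ∧ IsLocalMax fW wp ∧ IsLocalMin fW (1/2)) := by
  obtain rfl : fW = unitLogNormalDensity σ := funext fun w => by
    rw [hfW, hφ, hA, unitLogNormalDensity]
  exact ⟨unitLogNormalDensity_unimodal hσ, unitLogNormalDensity_bimodal⟩
end

section
/- For the unit-log-Student-t density f_W(w) = f_ν(A(w))/(w(1-w)σ_ρ), where f_ν is the Student-t density with ν > 0 degrees of freedom, lim_{w→0⁺} f_W(w) = ∞ and lim_{w→1⁻} f_W(w) = ∞. -/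
/-!
In the variable `t = logit w = log (w / (1 - w))` one has `1 / (w (1 - w)) ≥ exp (-t)`, which
grows exponentially as `w → 0⁺` (`t → -∞`), while the Student-t factor `fν (t / σ)` decays only
polynomially in `t`; so the exponential wins. The end `w → 1⁻` is the end `w → 0⁺` after the
reflection `w ↦ 1 - w`, which negates `logit` and leaves the even density unchanged.
-/

open Real Set Filter Topology

noncomputable def logit (w : ℝ) : ℝ := log (w / (1 - w))

lemma logit_one_sub (w : ℝ) : logit (1 - w) = -logit w := by
  rw [logit, logit, sub_sub_cancel, ← log_inv, inv_div]

lemma tendsto_logit_nhdsGT_zero : Tendsto logit (𝓝[>] 0) atBot := by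
  have hodds : Tendsto (fun w : ℝ => w / (1 - w)) (𝓝[>] 0) (𝓝[>] 0) := by
    have hcont : ContinuousWithinAt (fun w : ℝ => w / (1 - w)) (Ioo 0 1) 0 :=
      (continuousAt_id.div (continuousAt_const.sub continuousAt_id)
        (by norm_num)).continuousWithinAt
    have h := hcont.tendsto_nhdsWithin (t := Ioi 0) fun w hw => div_pos hw.1 (sub_pos.2 hw.2)
    rwa [sub_zero, zero_div, nhdsWithin_Ioo_eq_nhdsGT one_pos] at h
  exact tendsto_log_nhdsGT_zero.comp hodds

lemma exp_neg_logit_le_inv_mul_one_sub {w : ℝ} (hw : w ∈ Ioo 0 1) :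
    exp (-logit w) ≤ (w * (1 - w))⁻¹ := by
  obtain ⟨hw0, hw1⟩ := hw
  have h1w : 0 < 1 - w := sub_pos.2 hw1
  rw [logit, exp_neg, exp_log (div_pos hw0 h1w), inv_div, ← one_div,
    div_le_div_iff₀ hw0 (mul_pos hw0 h1w)]
  nlinarith [mul_pos (mul_pos hw0 hw0) (by linarith : 0 < 2 - w)]

lemma tendsto_comp_logit_div_nhdsGT_zero {g : ℝ → ℝ} (hg0 : ∀ t, 0 ≤ g t)
    (hg : Tendsto (fun t => g t * exp (-t)) atBot atTop) :
    Tendsto (fun w => g (logit w) / (w * (1 - w))) (𝓝[>] 0) atTop := by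
  refine tendsto_atTop_mono' _ ?_ (hg.comp tendsto_logit_nhdsGT_zero)
  filter_upwards [Ioo_mem_nhdsGT one_pos] with w hw
  exact mul_le_mul_of_nonneg_left (exp_neg_logit_le_inv_mul_one_sub hw) (hg0 _)

lemma tendsto_comp_logit_div_nhdsLT_one {g : ℝ → ℝ} (hg0 : ∀ t, 0 ≤ g t)
    (hg : Tendsto (fun t => g t * exp t) atTop atTop) :
    Tendsto (fun w => g (logit w) / (w * (1 - w))) (𝓝[<] 1) atTop := by
  have hzero := tendsto_comp_logit_div_nhdsGT_zero (g := fun t => g (-t)) (fun t => hg0 _)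
    (hg.comp tendsto_neg_atBot_atTop)
  have hreflect : Tendsto (fun w : ℝ => 1 - w) (𝓝[<] 1) (𝓝[>] 0) := by
    have h := ((continuous_const.sub continuous_id).continuousWithinAt (x := (1 : ℝ))
      (s := Iio 1)).tendsto_nhdsWithin (t := Ioi 0) fun w hw => sub_pos.2 hw
    rwa [Pi.sub_apply, id, sub_self] at h
  refine (hzero.comp hreflect).congr fun w => ?_
  simp [logit_one_sub, mul_comm]

lemma tendsto_one_add_mul_sq_rpow_neg_mul_exp_atTop {c p : ℝ} (hc : 0 ≤ c) (hp : 0 ≤ p) :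
    Tendsto (fun s => (1 + c * s ^ 2) ^ (-p) * exp s) atTop atTop := by
  have hK : 0 < (1 + c) ^ (-p) := rpow_pos_of_pos (by linarith) _
  refine tendsto_atTop_mono' _ ?_ ((tendsto_exp_div_rpow_atTop (2 * p)).const_mul_atTop hK)
  filter_upwards [eventually_ge_atTop (1 : ℝ)] with s hs
  have hs0 : 0 < s := one_pos.trans_le hs
  have hbase : 1 + c * s ^ 2 ≤ (1 + c) * s ^ 2 := by nlinarith [one_le_pow₀ (n := 2) hs]
  have hsq : (s ^ 2) ^ (-p) = (s ^ (2 * p))⁻¹ := by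
    rw [rpow_neg (by positivity), ← rpow_natCast, ← rpow_mul hs0.le, Nat.cast_ofNat]
  calc (1 + c) ^ (-p) * (exp s / s ^ (2 * p))
      = ((1 + c) * s ^ 2) ^ (-p) * exp s := by
        rw [mul_rpow (by linarith) (by positivity), hsq]
        ring
    _ ≤ (1 + c * s ^ 2) ^ (-p) * exp s :=
        mul_le_mul_of_nonneg_right
          (rpow_le_rpow_of_nonpos (by positivity) hbase (neg_nonpos.2 hp)) (exp_pos s).le

theorem unit_log_student_t_boundary_limits (σ ν : ℝ) (hσ : 0 < σ) (hν : 0 < ν)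
    (C : ℝ) (hC : C = Real.Gamma ((ν+1)/2) / (Real.sqrt (ν*π) * Real.Gamma (ν/2)))
    (fν : ℝ → ℝ) (hfν : ∀ x, fν x = C * (1 + x^2/ν) ^ (-(ν+1)/2 : ℝ))
    (A : ℝ → ℝ) (hA : ∀ w, A w = (1/σ) * Real.log (w / (1 - w)))
    (fW : ℝ → ℝ) (hfW : ∀ w, fW w = fν (A w) / (w * (1 - w) * σ)) :
    Tendsto fW (𝓝[>] 0) atTop ∧ Tendsto fW (𝓝[<] 1) atTop := by
  have hC0 : 0 < C := by
    rw [hC]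
    have := Gamma_pos_of_pos (by positivity : 0 < (ν + 1) / 2)
    have := Gamma_pos_of_pos (by positivity : 0 < ν / 2)
    have := sqrt_pos.2 (mul_pos hν pi_pos)
    positivity
  set g : ℝ → ℝ := fun t => C / σ * (1 + (σ ^ 2 * ν)⁻¹ * t ^ 2) ^ (-((ν + 1) / 2))
  have hfW_eq : fW = fun w => g (logit w) / (w * (1 - w)) := by
    funext w
    have hsq : (1 / σ * log (w / (1 - w))) ^ 2 / ν =
        (σ ^ 2 * ν)⁻¹ * log (w / (1 - w)) ^ 2 := by
      field_simp
    simp only [hfW, hfν, hA, g, logit]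
    rw [hsq, neg_div, mul_comm _ σ, ← div_div]
    ring
  have hg0 : ∀ t, 0 ≤ g t := fun t => by positivity
  have hg : Tendsto (fun t => g t * exp t) atTop atTop := by
    simpa only [g, mul_assoc] using (tendsto_one_add_mul_sq_rpow_neg_mul_exp_atTop
      (by positivity) (by positivity)).const_mul_atTop (div_pos hC0 hσ)
  rw [hfW_eq]
  refine ⟨tendsto_comp_logit_div_nhdsGT_zero hg0 ?_, tendsto_comp_logit_div_nhdsLT_one hg0 hg⟩
  simpa [g, Function.comp_def] using hg.comp tendsto_neg_atBot_atTop
end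

section
/- If Z ~ Laplace(0, 1/√2) and W = 1/(1 + exp(-σ_ρ·Z)), then for a positive integer n with n·σ_ρ < √2, E[W^{-n}] = Σ_{k=0}^{n} C(n,k)·(1 - k²σ_ρ²/2)^{-1}. -/
/-!
Since `W⁻¹ = 1 + exp (-σ Z)`, the binomial theorem writes `E[W⁻ⁿ]` as `∑ C(n,k) M(-kσ)` with `M` the
moment generating function of `Z`. For a Laplace variable with density `b/2 · exp (-b|x|)` and
`|t| < b`, splitting `∫ exp (-b|x| + t x)` at `0` gives `M(t) = b² / (b² - t²)`, which is
`(1 - t²/2)⁻¹` for `b = √2`.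
-/

open Real MeasureTheory ProbabilityTheory Set Finset

section LaplaceIntegral

lemma exp_neg_mul_abs_add_mul_eqOn_Iic (b t : ℝ) :
    EqOn (fun x => exp ((b + t) * x)) (fun x => exp (-b * |x| + t * x)) (Iic 0) := by
  intro x hx
  simp only [abs_of_nonpos (mem_Iic.mp hx)]
  ring_nf

lemma exp_neg_mul_abs_add_mul_eqOn_Ioi (b t : ℝ) :
    EqOn (fun x => exp ((t - b) * x)) (fun x => exp (-b * |x| + t * x)) (Ioi 0) := by
  intro x hx
  simp only [abs_of_pos (mem_Ioi.mp hx)]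
  ring_nf

variable {b t : ℝ}

lemma integrable_exp_neg_mul_abs_add_mul (ht : |t| < b) :
    Integrable (fun x => exp (-b * |x| + t * x)) := by
  rw [← integrableOn_univ, ← Iic_union_Ioi (a := 0)]
  exact ((integrableOn_exp_mul_Iic (by linarith [neg_abs_le t]) 0).congr_fun
      (exp_neg_mul_abs_add_mul_eqOn_Iic b t) measurableSet_Iic).union
    ((integrableOn_exp_mul_Ioi (by linarith [le_abs_self t]) 0).congr_fun
      (exp_neg_mul_abs_add_mul_eqOn_Ioi b t) measurableSet_Ioi)

theorem integral_exp_neg_mul_abs_add_mul (ht : |t| < b) :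
    ∫ x, exp (-b * |x| + t * x) = 2 * b / (b ^ 2 - t ^ 2) := by
  have hbt : 0 < b + t := by linarith [neg_abs_le t]
  have htb : t - b < 0 := by linarith [le_abs_self t]
  have hf := integrable_exp_neg_mul_abs_add_mul ht
  rw [← intervalIntegral.integral_Iic_add_Ioi hf.integrableOn hf.integrableOn,
    ← setIntegral_congr_fun measurableSet_Iic (exp_neg_mul_abs_add_mul_eqOn_Iic b t),
    ← setIntegral_congr_fun measurableSet_Ioi (exp_neg_mul_abs_add_mul_eqOn_Ioi b t),
    integral_exp_mul_Iic hbt, integral_exp_mul_Ioi htb]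
  simp only [mul_zero, exp_zero]
  have : b ^ 2 - t ^ 2 ≠ 0 := by nlinarith
  field_simp [hbt.ne', htb.ne]
  ring

end LaplaceIntegral

section MapEqWithDensity

variable {Ω : Type*} [MeasurableSpace Ω] {μ : Measure Ω} {Z : Ω → ℝ} {d g : ℝ → ℝ}

lemma integrable_comp_iff_of_map_eq_withDensity (hZ : AEMeasurable Z μ) (hd : Measurable d)
    (hd0 : ∀ x, 0 ≤ d x) (hmap : μ.map Z = volume.withDensity (fun x => ENNReal.ofReal (d x)))
    (hg : Measurable g) :
    Integrable (fun ω => g (Z ω)) μ ↔ Integrable (fun x => d x * g x) := by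
  change Integrable (g ∘ Z) μ ↔ _
  rw [← integrable_map_measure (by rw [hmap]; exact hg.aestronglyMeasurable) hZ, hmap,
    integrable_withDensity_iff_integrable_smul' hd.ennreal_ofReal
      (ae_of_all _ fun _ => ENNReal.ofReal_lt_top)]
  simp only [ENNReal.toReal_ofReal (hd0 _), smul_eq_mul]

lemma integral_comp_of_map_eq_withDensity (hZ : AEMeasurable Z μ) (hd : Measurable d)
    (hd0 : ∀ x, 0 ≤ d x) (hmap : μ.map Z = volume.withDensity (fun x => ENNReal.ofReal (d x)))
    (hg : Measurable g) :
    ∫ ω, g (Z ω) ∂μ = ∫ x, d x * g x := by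
  rw [← integral_map hZ (by rw [hmap]; exact hg.aestronglyMeasurable), hmap,
    integral_withDensity_eq_integral_toReal_smul hd.ennreal_ofReal
      (ae_of_all _ fun _ => ENNReal.ofReal_lt_top)]
  simp only [ENNReal.toReal_ofReal (hd0 _), smul_eq_mul]

end MapEqWithDensity

section Laplace

variable {Ω : Type*} [MeasurableSpace Ω] {μ : Measure Ω} {Z : Ω → ℝ} {b t : ℝ}

lemma laplace_density_mul_exp (b t x : ℝ) :
    b / 2 * exp (-b * |x|) * exp (t * x) = b / 2 * exp (-b * |x| + t * x) := by
  rw [exp_add, mul_assoc]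

lemma integrable_exp_mul_of_map_eq_laplace (hZ : AEMeasurable Z μ)
    (hmap : μ.map Z = volume.withDensity (fun x => ENNReal.ofReal (b / 2 * exp (-b * |x|))))
    (ht : |t| < b) :
    Integrable (fun ω => exp (t * Z ω)) μ := by
  have hb : 0 ≤ b := (abs_nonneg t).trans ht.le
  rw [integrable_comp_iff_of_map_eq_withDensity (g := fun x => exp (t * x)) hZ (by fun_prop)
    (fun x => by positivity) hmap (by fun_prop)]
  simp only [laplace_density_mul_exp]
  exact (integrable_exp_neg_mul_abs_add_mul ht).const_mul _

theorem mgf_of_map_eq_laplace (hZ : AEMeasurable Z μ)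
    (hmap : μ.map Z = volume.withDensity (fun x => ENNReal.ofReal (b / 2 * exp (-b * |x|))))
    (ht : |t| < b) :
    mgf Z μ t = b ^ 2 / (b ^ 2 - t ^ 2) := by
  have hb : 0 ≤ b := (abs_nonneg t).trans ht.le
  rw [mgf, integral_comp_of_map_eq_withDensity (g := fun x => exp (t * x)) hZ (by fun_prop)
    (fun x => by positivity) hmap (by fun_prop)]
  simp only [laplace_density_mul_exp]
  rw [integral_const_mul, integral_exp_neg_mul_abs_add_mul ht]
  ring

end Laplace

lemma one_add_exp_pow (x : ℝ) (n : ℕ) :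
    (1 + exp x) ^ n = ∑ k ∈ range (n + 1), (n.choose k : ℝ) * exp (k * x) := by
  rw [add_comm, add_pow]
  refine sum_congr rfl fun k _ => ?_
  rw [one_pow, mul_one, mul_comm, exp_nat_mul]

theorem unit_log_laplace_negative_moments_general
    {Ω : Type*} [MeasurableSpace Ω] (μ : Measure Ω)
    (σ : ℝ) (hσ : 0 < σ)
    (Z : Ω → ℝ) (hZ : Measurable Z)
    (hdens : Measure.map Z μ = volume.withDensity
      (fun x => ENNReal.ofReal ((1 / Real.sqrt 2) * Real.exp (-Real.sqrt 2 * |x|))))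
    (W : Ω → ℝ) (hW : ∀ ω, W ω = 1 / (1 + Real.exp (-σ * Z ω)))
    (n : ℕ) (hnσ : (n : ℝ) * σ < Real.sqrt 2) :
    ∫ ω, (W ω)⁻¹ ^ n ∂μ =
      ∑ k ∈ Finset.range (n+1), (n.choose k : ℝ) * (1 - (k:ℝ)^2 * σ^2 / 2)⁻¹ := by
  have hlaplace : μ.map Z =
      volume.withDensity (fun x => ENNReal.ofReal (√2 / 2 * exp (-√2 * |x|))) := by
    rw [hdens, ← sqrt_div_self']
  have hkσ : ∀ k ∈ range (n + 1), |k * -σ| < √2 := fun k hk => by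
    have : (k : ℝ) ≤ n := by exact_mod_cast mem_range_succ_iff.mp hk
    rw [abs_of_nonpos (by nlinarith)]
    nlinarith
  simp_rw [hW, one_div, inv_inv, one_add_exp_pow, ← mul_assoc]
  rw [integral_finsetSum _ fun k hk =>
    (integrable_exp_mul_of_map_eq_laplace hZ.aemeasurable hlaplace (hkσ k hk)).const_mul _]
  refine sum_congr rfl fun k hk => ?_
  rw [integral_const_mul, ← mgf, mgf_of_map_eq_laplace hZ.aemeasurable hlaplace (hkσ k hk),
    sq_sqrt zero_le_two]
  field_simp

theorem unit_log_laplace_negative_moments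
    {Ω : Type*} [MeasurableSpace Ω] (μ : Measure Ω) [IsProbabilityMeasure μ]
    (σ : ℝ) (hσ : 0 < σ)
    (Z : Ω → ℝ) (hZ : Measurable Z)
    (hdens : Measure.map Z μ = volume.withDensity
      (fun x => ENNReal.ofReal ((1 / Real.sqrt 2) * Real.exp (-Real.sqrt 2 * |x|))))
    (W : Ω → ℝ) (hW : ∀ ω, W ω = 1 / (1 + Real.exp (-σ * Z ω)))
    (n : ℕ) (hn : 0 < n) (hnσ : (n : ℝ) * σ < Real.sqrt 2) :
    ∫ ω, (W ω)⁻¹ ^ n ∂μ =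
      ∑ k ∈ Finset.range (n+1), (n.choose k : ℝ) * (1 - (k:ℝ)^2 * σ^2 / 2)⁻¹ :=
  unit_log_laplace_negative_moments_general μ σ hσ Z hZ hdens W hW n hnσ
end
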